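/- arXiv:1507.06980 — 2 statements merged into one kernel-verified Lean document; each statement's English description precedes it below -/
import Mathlib

section
/- Let (x, y, θ, λθ) : [0,T] → ℝ⁴ be differentiable with ẋ = v cos θ, ẏ = v sin θ, and λ̇θ = v·(a·sin θ − b·cos θ) for constants a, b and v > 0. Then the function t ↦ λθ(t) + b·x(t) − a·y(t) is constant on [0,T]. Consequently, any two times t1, t2 with λθ(t1) = λθ(t2) = 0 satisfy b·x(t1) − a·y(t1) = b·x(t2) − a·y(t2); i.e., all points of the trajectory where λθ vanishes lie on a common straight line b·x − a·y = c (provided (a,b) ≠ (0,0)). -/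
open Real Set

theorem Convex.eq_of_forall_hasDerivAt_zero {E : Type*} [NormedAddCommGroup E] [NormedSpace ℝ E]
    {f : ℝ → E} {s : Set ℝ} (hs : Convex ℝ s) (hf : ∀ t ∈ s, HasDerivAt f 0 t)
    {t₁ t₂ : ℝ} (h₁ : t₁ ∈ s) (h₂ : t₂ ∈ s) : f t₁ = f t₂ := by
  have h : ‖f t₁ - f t₂‖ ≤ 0 * ‖t₁ - t₂‖ :=
    hs.norm_image_sub_le_of_norm_hasDerivWithin_le (fun t ht => (hf t ht).hasDerivWithinAt)
      (fun _ _ => norm_zero.le) h₂ h₁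
  rwa [zero_mul, norm_le_zero_iff, sub_eq_zero] at h

theorem hasDerivAt_dubins_firstIntegral {v a b t : ℝ} {x y θ lθ : ℝ → ℝ}
    (hx : HasDerivAt x (v * cos (θ t)) t) (hy : HasDerivAt y (v * sin (θ t)) t)
    (hlθ : HasDerivAt lθ (v * (a * sin (θ t) - b * cos (θ t))) t) :
    HasDerivAt (fun s => lθ s + b * x s - a * y s) 0 t := by
  refine ((hlθ.add (hx.const_mul b)).sub (hy.const_mul a)).congr_deriv ?_
  ring

theorem dubins_zeros_of_lambda_theta_collinear_general
    (T v a b : ℝ)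
    (x y θ lθ : ℝ → ℝ)
    (hx : ∀ t ∈ Set.Icc (0:ℝ) T, HasDerivAt x (v * Real.cos (θ t)) t)
    (hy : ∀ t ∈ Set.Icc (0:ℝ) T, HasDerivAt y (v * Real.sin (θ t)) t)
    (hlθ : ∀ t ∈ Set.Icc (0:ℝ) T,
      HasDerivAt lθ (v * (a * Real.sin (θ t) - b * Real.cos (θ t))) t) :
    (∀ t1 ∈ Set.Icc (0:ℝ) T, ∀ t2 ∈ Set.Icc (0:ℝ) T,
      lθ t1 + b * x t1 - a * y t1 = lθ t2 + b * x t2 - a * y t2) ∧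
    (∀ t1 ∈ Set.Icc (0:ℝ) T, ∀ t2 ∈ Set.Icc (0:ℝ) T,
      lθ t1 = 0 → lθ t2 = 0 →
        b * x t1 - a * y t1 = b * x t2 - a * y t2) := by
  have firstIntegral_const : ∀ t1 ∈ Icc (0:ℝ) T, ∀ t2 ∈ Icc (0:ℝ) T,
      lθ t1 + b * x t1 - a * y t1 = lθ t2 + b * x t2 - a * y t2 := fun t1 h1 t2 h2 =>
    (convex_Icc 0 T).eq_of_forall_hasDerivAt_zero
      (fun t ht => hasDerivAt_dubins_firstIntegral (hx t ht) (hy t ht) (hlθ t ht)) h1 h2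
  refine ⟨firstIntegral_const, fun t1 h1 t2 h2 hz1 hz2 => ?_⟩
  simpa [hz1, hz2] using firstIntegral_const t1 h1 t2 h2

/-- Fact 2: lθ + b·x − a·y is a first integral; hence all points where lθ = 0
lie on the common line b·x − a·y = c. -/
theorem dubins_zeros_of_lambda_theta_collinear
    (T v a b : ℝ) (hT : 0 < T) (hv : 0 < v)
    (x y θ lθ : ℝ → ℝ)
    (hx : ∀ t ∈ Set.Icc (0:ℝ) T, HasDerivAt x (v * Real.cos (θ t)) t)
    (hy : ∀ t ∈ Set.Icc (0:ℝ) T, HasDerivAt y (v * Real.sin (θ t)) t)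
    (hlθ : ∀ t ∈ Set.Icc (0:ℝ) T,
      HasDerivAt lθ (v * (a * Real.sin (θ t) - b * Real.cos (θ t))) t) :
    (∀ t1 ∈ Set.Icc (0:ℝ) T, ∀ t2 ∈ Set.Icc (0:ℝ) T,
      lθ t1 + b * x t1 - a * y t1 = lθ t2 + b * x t2 - a * y t2) ∧
    (∀ t1 ∈ Set.Icc (0:ℝ) T, ∀ t2 ∈ Set.Icc (0:ℝ) T,
      lθ t1 = 0 → lθ t2 = 0 →
        b * x t1 - a * y t1 = b * x t2 - a * y t2) :=
  dubins_zeros_of_lambda_theta_collinear_general T v a b x y θ lθ hx hy hlθ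
end

section
/- Consider two circular arcs of equal radius ρ joined at an inflexion point P, traversed with opposite turning directions (an LR or RL path), such that the start point A, the inflexion point P, and the end point B are collinear. Then the arc length of the first segment equals the arc length of the second segment, and the heading of the path at A equals the heading at B. -/
/-!
Along an arc of constant curvature `κ` whose heading turns from `φ a` to `φ b`, the chord
satisfies `κ • (B - A) = 2 sin ((φ b - φ a) / 2) • (cos m, sin m)` with `m` the mean heading.
For the two arcs of an LR path with turning angles `θ₁ = s1 / ρ` and `θ₂ = s2 / ρ`, the cross
product of the chords `AP` and `PB` is therefore a nonzero multiple of
`sin (θ₁ / 2) * sin (θ₂ / 2) * sin ((θ₁ - θ₂) / 2)`. Collinearity makes it vanish, and since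
`θ₁, θ₂ ∈ (0, 2π)` only the last factor can, which forces `θ₁ = θ₂`.
-/

open Real Set

theorem sub_eq_sub_of_hasDerivAt_eq {E : Type*} [NormedAddCommGroup E] [NormedSpace ℝ E]
    {f g d : ℝ → E} {a b : ℝ} (hab : a ≤ b)
    (hf : ∀ s ∈ Icc a b, HasDerivAt f (d s) s) (hg : ∀ s ∈ Icc a b, HasDerivAt g (d s) s) :
    f b - f a = g b - g a := by
  have hconst := constant_of_has_deriv_right_zero (f := f - g)
    (fun s hs => ((hf s hs).sub (hg s hs)).continuousAt.continuousWithinAt)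
    (fun s hs => by
      simpa using ((hf s (mem_Icc_of_Ico hs)).sub (hg s (mem_Icc_of_Ico hs))).hasDerivWithinAt)
    b (right_mem_Icc.2 hab)
  rw [Pi.sub_apply, Pi.sub_apply] at hconst
  rw [sub_eq_sub_iff_sub_eq_sub, hconst]

section ConstantCurvature

variable {x y φ : ℝ → ℝ} {κ a b : ℝ}

theorem chord_fst_of_constant_curvature (hab : a ≤ b)
    (hφ : ∀ s ∈ Icc a b, φ s = φ a + κ * (s - a))
    (hx : ∀ s ∈ Icc a b, HasDerivAt x (cos (φ s)) s) :
    κ * (x b - x a) = 2 * sin ((φ b - φ a) / 2) * cos ((φ a + φ b) / 2) := by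
  have hsin : ∀ s ∈ Icc a b, HasDerivAt (fun t => sin (φ a + κ * (t - a))) (κ * cos (φ s)) s := by
    intro s hs
    rw [hφ s hs, mul_comm]
    simpa using (((hasDerivAt_id s).sub_const a).const_mul κ |>.const_add (φ a)).sin
  have h := sub_eq_sub_of_hasDerivAt_eq hab (fun s hs => (hx s hs).const_mul κ) hsin
  rwa [sub_self, mul_zero, add_zero, ← hφ b (right_mem_Icc.2 hab), ← mul_sub, sin_sub_sin,
    add_comm (φ b)] at h

theorem chord_snd_of_constant_curvature (hab : a ≤ b)
    (hφ : ∀ s ∈ Icc a b, φ s = φ a + κ * (s - a))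
    (hy : ∀ s ∈ Icc a b, HasDerivAt y (sin (φ s)) s) :
    κ * (y b - y a) = 2 * sin ((φ b - φ a) / 2) * sin ((φ a + φ b) / 2) := by
  have hcos : ∀ s ∈ Icc a b,
      HasDerivAt (fun t => -cos (φ a + κ * (t - a))) (κ * sin (φ s)) s := by
    intro s hs
    rw [hφ s hs, mul_comm]
    simpa using (((hasDerivAt_id s).sub_const a).const_mul κ |>.const_add (φ a)).cos.fun_neg
  have h := sub_eq_sub_of_hasDerivAt_eq hab (fun s hs => (hy s hs).const_mul κ) hcos
  rw [sub_self, mul_zero, add_zero, ← hφ b (right_mem_Icc.2 hab), ← mul_sub, neg_sub_neg,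
    cos_sub_cos, ← neg_sub (φ b), neg_div, sin_neg] at h
  linear_combination h

theorem mul_mul_cross_eq_of_constant_curvature {p κ₁ κ₂ : ℝ} (hap : a ≤ p) (hpb : p ≤ b)
    (hφ₁ : ∀ s ∈ Icc a p, φ s = φ a + κ₁ * (s - a))
    (hφ₂ : ∀ s ∈ Icc p b, φ s = φ p + κ₂ * (s - p))
    (hx : ∀ s ∈ Icc a b, HasDerivAt x (cos (φ s)) s)
    (hy : ∀ s ∈ Icc a b, HasDerivAt y (sin (φ s)) s) :
    κ₁ * κ₂ * ((x p - x a) * (y b - y p) - (y p - y a) * (x b - x p)) =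
      4 * sin ((φ p - φ a) / 2) * sin ((φ b - φ p) / 2) * sin ((φ b - φ a) / 2) := by
  have h₁ : Icc a p ⊆ Icc a b := Icc_subset_Icc_right hpb
  have h₂ : Icc p b ⊆ Icc a b := Icc_subset_Icc_left hap
  have hx₁ := chord_fst_of_constant_curvature hap hφ₁ fun s hs => hx s (h₁ hs)
  have hy₁ := chord_snd_of_constant_curvature hap hφ₁ fun s hs => hy s (h₁ hs)
  have hx₂ := chord_fst_of_constant_curvature hpb hφ₂ fun s hs => hx s (h₂ hs)
  have hy₂ := chord_snd_of_constant_curvature hpb hφ₂ fun s hs => hy s (h₂ hs)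
  calc κ₁ * κ₂ * ((x p - x a) * (y b - y p) - (y p - y a) * (x b - x p))
      = κ₁ * (x p - x a) * (κ₂ * (y b - y p)) - κ₁ * (y p - y a) * (κ₂ * (x b - x p)) := by ring
    _ = 4 * sin ((φ p - φ a) / 2) * sin ((φ b - φ p) / 2) *
          sin ((φ p + φ b) / 2 - (φ a + φ p) / 2) := by
      rw [hx₁, hy₁, hx₂, hy₂, sin_sub]; ring
    _ = _ := by rw [show (φ p + φ b) / 2 - (φ a + φ p) / 2 = (φ b - φ a) / 2 by ring]

end ConstantCurvature

theorem cross_eq_zero_of_collinear {p q r : ℝ × ℝ} (h : Collinear ℝ {p, q, r}) :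
    (q.1 - p.1) * (r.2 - q.2) - (q.2 - p.2) * (r.1 - q.1) = 0 := by
  obtain ⟨v, hv⟩ := (collinear_iff_of_mem (mem_insert p _)).1 h
  obtain ⟨s, rfl⟩ := hv q (by simp)
  obtain ⟨t, rfl⟩ := hv r (by simp)
  simp only [vadd_eq_add, Prod.fst_add, Prod.snd_add, Prod.smul_fst, Prod.smul_snd, smul_eq_mul]
  ring

theorem eq_of_sin_half_mul_sin_half_mul_sin_half_sub_eq_zero {α β : ℝ}
    (hα : α ∈ Ioo 0 (2 * π)) (hβ : β ∈ Ioo 0 (2 * π))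
    (h : sin (α / 2) * sin (β / 2) * sin ((α - β) / 2) = 0) : α = β := by
  obtain ⟨hα₀, hα₁⟩ := hα
  obtain ⟨hβ₀, hβ₁⟩ := hβ
  have hsinα : sin (α / 2) ≠ 0 := (sin_pos_of_pos_of_lt_pi (by linarith) (by linarith)).ne'
  have hsinβ : sin (β / 2) ≠ 0 := (sin_pos_of_pos_of_lt_pi (by linarith) (by linarith)).ne'
  have hsub := (sin_eq_zero_iff_of_lt_of_lt (by linarith) (by linarith)).1 <|
    (mul_eq_zero.1 h).resolve_left (mul_ne_zero hsinα hsinβ)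
  linarith

/-- Two circular arcs of equal radius ρ (< one full revolution each), joined
C¹ at an inflexion point P with opposite turning directions (L then R): if the
start A, the junction P and the end B are collinear, then the two arc lengths
are equal and the heading at A equals the heading at B. -/
theorem dubins_LR_collinear_implies_equal_arcs
    (ρ s1 s2 φ0 : ℝ) (hρ : 0 < ρ)
    (hs1 : 0 < s1) (hs2 : 0 < s2)
    (hs1' : s1 < 2 * Real.pi * ρ) (hs2' : s2 < 2 * Real.pi * ρ)
    (φ x y : ℝ → ℝ)
    -- first arc: left turn at rate 1/ρ
    (hφ1 : ∀ s ∈ Set.Icc 0 s1, φ s = φ0 + s / ρ)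
    -- second arc: right turn at rate 1/ρ (C¹ at the junction s = s1)
    (hφ2 : ∀ s ∈ Set.Icc s1 (s1 + s2), φ s = φ0 + s1 / ρ - (s - s1) / ρ)
    -- unit-speed planar curve with heading φ
    (hx : ∀ s ∈ Set.Icc 0 (s1 + s2), HasDerivAt x (Real.cos (φ s)) s)
    (hy : ∀ s ∈ Set.Icc 0 (s1 + s2), HasDerivAt y (Real.sin (φ s)) s)
    -- A, P, B collinear
    (hcol : Collinear ℝ ({(x 0, y 0), (x s1, y s1), (x (s1 + s2), y (s1 + s2))}
      : Set (ℝ × ℝ))) :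
    s1 = s2 ∧ φ (s1 + s2) = φ 0 := by
  have hA : φ 0 = φ0 := by simpa using hφ1 0 (left_mem_Icc.2 hs1.le)
  have hP : φ s1 = φ0 + s1 / ρ := hφ1 s1 (right_mem_Icc.2 hs1.le)
  have hB : φ (s1 + s2) = φ0 + s1 / ρ - s2 / ρ := by
    simpa using hφ2 (s1 + s2) (right_mem_Icc.2 (by linarith))
  have hcross := mul_mul_cross_eq_of_constant_curvature (κ₁ := ρ⁻¹) (κ₂ := -ρ⁻¹)
    hs1.le (by linarith : s1 ≤ s1 + s2)
    (fun s hs => by rw [hφ1 s hs, hA]; ring) (fun s hs => by rw [hφ2 s hs, hP]; ring) hx hy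
  rw [cross_eq_zero_of_collinear hcol, mul_zero, hA, hP, hB, add_sub_cancel_left,
    sub_sub_cancel_left, sub_right_comm, add_sub_cancel_left, neg_div, sin_neg] at hcross
  have hturn (s : ℝ) (hs : 0 < s) (hs' : s < 2 * π * ρ) : s / ρ ∈ Ioo 0 (2 * π) :=
    ⟨by positivity, (div_lt_iff₀ hρ).2 hs'⟩
  have hs : s1 / ρ = s2 / ρ := by
    refine eq_of_sin_half_mul_sin_half_mul_sin_half_sub_eq_zero (hturn s1 hs1 hs1')
      (hturn s2 hs2 hs2') ?_
    linear_combination hcross / 4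
  have hs12 : s1 = s2 := by rwa [div_left_inj' hρ.ne'] at hs
  exact ⟨hs12, by rw [hB, hA, hs12]; ring⟩
end
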